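/- In the concrete quasi-free CAR model with λ : ℤ → ℝ, 0 < λ_l < 1 for all l, the operators G∘b_l lie in the commutant of the *-algebra generated by the a_m: for all l, m ∈ ℤ, (G∘b_l)∘a_m = a_m∘(G∘b_l) and (G∘b_l)∘a_m* = a_m*∘(G∘b_l). (This is the statement that Γ⊗Γ·b_R(h_l) belongs to the commutant M_R′ of the quasi-free CAR factor M_R.) -/

import Mathlib

/-!
On `F₋ ⊗ F₋` put `c_l = a*(h_l) ⊗ Γ` and `d_l = 1 ⊗ a(h_l)`; together they satisfy the CAR.
Because `λ_l + (1 - λ_l) = 1`, the pair `(a_l, b_l)` is a rotation of `(c_l, d_l)`: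
`a_l = √(1-λ_l) c_l + √λ_l d_l` and `b_l = √λ_l c_l - √(1-λ_l) d_l`. Hence `b_l` anticommutes
with `a_m`, and also with `a_m*`: for `l = m` the two contributions `±√λ_l √(1-λ_l)` cancel.
All these operators are odd for the grading `G`, and `G b_l` commutes with any operator that
anticommutes with both `G` and `b_l`.
-/


/- The concrete quasi-free CAR model: `H = ℓ²(Finset ℤ × Finset ℤ)` with orthonormal basis
`e (A, B)`, vacuum `Ω = e (∅, ∅)`, and operators `a l`, `b l`, `G` given on the basis by the
quasi-free formulas with symbol `λ` (diagonal, `R h_l = λ_l h_l`). -/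

noncomputable section

/-- The GNS Hilbert space: `ℓ²` over pairs of finite subsets of `ℤ`. -/
abbrev CARSpace := lp (fun _ : Finset ℤ × Finset ℤ => ℂ) 2

/-- The orthonormal basis vector `e_{(A,B)}`. -/
def carE (p : Finset ℤ × Finset ℤ) : CARSpace := lp.single 2 p 1

/-- The vacuum vector `Ω = e_{(∅,∅)}`. -/
def carΩ : CARSpace := carE (∅, ∅)

/-- `n(l, X)` = number of elements of `X` strictly below `l`. -/
def nlt (l : ℤ) (X : Finset ℤ) : ℕ := (X.filter fun j => j < l).card

/-- `a` is the family of quasi-free annihilation-type operators `a_l = π_R(a(h_l))`: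
`a_l e_{(A,B)} = √(1−λ_l)·(−1)^{|B|}·(−1)^{n(l,A)}·[l ∉ A]·e_{(A∪{l},B)}
              + √(λ_l)·(−1)^{n(l,B)}·[l ∈ B]·e_{(A,B∖{l})}`. -/
def IsCAR_a (lam : ℤ → ℝ) (a : ℤ → CARSpace →L[ℂ] CARSpace) : Prop :=
  ∀ (l : ℤ) (A B : Finset ℤ),
    a l (carE (A, B)) =
      ((Real.sqrt (1 - lam l) : ℂ) * (-1) ^ B.card * (-1) ^ nlt l A *
          (if l ∈ A then 0 else 1)) • carE (insert l A, B) +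
      ((Real.sqrt (lam l) : ℂ) * (-1) ^ nlt l B *
          (if l ∈ B then 1 else 0)) • carE (A, B.erase l)

/-- `b` is the family of commutant quasi-free operators:
`b_l e_{(A,B)} = √(λ_l)·(−1)^{|B|}·(−1)^{n(l,A)}·[l ∉ A]·e_{(A∪{l},B)}
              − √(1−λ_l)·(−1)^{n(l,B)}·[l ∈ B]·e_{(A,B∖{l})}`. -/
def IsCAR_b (lam : ℤ → ℝ) (b : ℤ → CARSpace →L[ℂ] CARSpace) : Prop :=
  ∀ (l : ℤ) (A B : Finset ℤ),
    b l (carE (A, B)) =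
      ((Real.sqrt (lam l) : ℂ) * (-1) ^ B.card * (-1) ^ nlt l A *
          (if l ∈ A then 0 else 1)) • carE (insert l A, B) -
      ((Real.sqrt (1 - lam l) : ℂ) * (-1) ^ nlt l B *
          (if l ∈ B then 1 else 0)) • carE (A, B.erase l)

/-- `G = Γ⊗Γ` : `G e_{(A,B)} = (−1)^{|A|+|B|} e_{(A,B)}`. -/
def IsCAR_G (G : CARSpace →L[ℂ] CARSpace) : Prop :=
  ∀ (A B : Finset ℤ), G (carE (A, B)) = ((-1 : ℂ) ^ (A.card + B.card)) • carE (A, B)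

open Finset ComplexConjugate

lemma carE_apply (p q : Finset ℤ × Finset ℤ) : carE p q = if q = p then 1 else 0 := by
  rw [carE, lp.single_apply]; split_ifs with h <;> simp [h]

lemma CARSpace.ext_carE {T S : CARSpace →L[ℂ] CARSpace} (h : ∀ p, T (carE p) = S (carE p)) :
    T = S := by
  ext1 x
  have hx := lp.hasSum_single (E := fun _ : Finset ℤ × Finset ℤ => ℂ) (p := 2) (by norm_num) x
  have hcarE : ∀ p, lp.single 2 p (x p) = x p • carE p := fun p => by
    rw [carE, ← lp.single_smul, smul_eq_mul, mul_one]
  refine (hx.mapL T).unique ((hx.mapL S).congr_fun fun p => ?_)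
  simp only [hcarE, map_smul, h]

lemma inner_carE_left (q : Finset ℤ × Finset ℤ) (x : CARSpace) : inner ℂ (carE q) x = x q := by
  rw [carE, lp.inner_single_left]; simp

lemma star_apply_carE_apply (T : CARSpace →L[ℂ] CARSpace) (p q : Finset ℤ × Finset ℤ) :
    star T (carE p) q = conj (T (carE q) p) := by
  rw [← inner_carE_left, ContinuousLinearMap.star_eq_adjoint,
    ContinuousLinearMap.adjoint_inner_right, ← inner_conj_symm, inner_carE_left]

lemma star_apply_carE_of_apply_carE {T : CARSpace →L[ℂ] CARSpace}
    {P Q : Finset ℤ × Finset ℤ → Prop} [DecidablePred P] [DecidablePred Q]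
    {f g : Finset ℤ × Finset ℤ → Finset ℤ × Finset ℤ} {w : Finset ℤ × Finset ℤ → ℂ}
    (hT : ∀ q, T (carE q) = if P q then w q • carE (f q) else 0)
    (hfg : ∀ p q, P q ∧ f q = p ↔ Q p ∧ g p = q) (p : Finset ℤ × Finset ℤ) :
    star T (carE p) = if Q p then conj (w (g p)) • carE (g p) else 0 := by
  ext q
  rw [star_apply_carE_apply, hT]
  by_cases hpq : Q p ∧ g p = q
  · obtain ⟨hQ, rfl⟩ := hpq
    obtain ⟨hP, hfgp⟩ := (hfg p (g p)).mpr ⟨hQ, rfl⟩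
    simp [hQ, hP, hfgp, carE_apply]
  · have hqp := mt (hfg p q).mp hpq
    split_ifs <;> simp_all [carE_apply, eq_comm]

lemma nlt_insert_self (l : ℤ) (X : Finset ℤ) : nlt l (insert l X) = nlt l X := by
  simp [nlt, filter_insert]

lemma nlt_erase_self (l : ℤ) (X : Finset ℤ) : nlt l (X.erase l) = nlt l X := by
  rw [nlt, filter_erase, erase_eq_of_notMem (by simp), nlt]

lemma neg_one_pow_nlt_insert {m : ℤ} {X : Finset ℤ} (h : m ∉ X) (l : ℤ) :
    (-1 : ℂ) ^ nlt l (insert m X) = (if m < l then -1 else 1) * (-1) ^ nlt l X := by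
  unfold nlt
  rw [filter_insert]
  split_ifs with hml
  · rw [card_insert_of_notMem (fun hm => h (mem_filter.mp hm).1), pow_succ, mul_comm]
  · rw [one_mul]

lemma neg_one_pow_nlt_erase {m : ℤ} {X : Finset ℤ} (h : m ∈ X) (l : ℤ) :
    (-1 : ℂ) ^ nlt l (X.erase m) = (if m < l then -1 else 1) * (-1) ^ nlt l X := by
  conv_rhs => rw [← insert_erase h, neg_one_pow_nlt_insert (notMem_erase m X)]
  split_ifs <;> ring

lemma neg_one_pow_card_insert {m : ℤ} {X : Finset ℤ} (h : m ∉ X) :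
    (-1 : ℂ) ^ (insert m X).card = -(-1) ^ X.card := by
  rw [card_insert_of_notMem h, pow_succ, mul_neg_one]

lemma neg_one_pow_card_erase {m : ℤ} {X : Finset ℤ} (h : m ∈ X) :
    (-1 : ℂ) ^ (X.erase m).card = -(-1) ^ X.card := by
  conv_rhs => rw [← insert_erase h, neg_one_pow_card_insert (notMem_erase m X), neg_neg]

-- `c_l = a*(h_l) ⊗ Γ` on `F₋ ⊗ F₋`.
def IsCreationLeft (c : ℤ → CARSpace →L[ℂ] CARSpace) : Prop :=
  ∀ l A B, c l (carE (A, B)) =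
    if l ∉ A then ((-1) ^ B.card * (-1) ^ nlt l A : ℂ) • carE (insert l A, B) else 0

-- `d_l = 1 ⊗ a(h_l)` on `F₋ ⊗ F₋`.
def IsAnnihilationRight (d : ℤ → CARSpace →L[ℂ] CARSpace) : Prop :=
  ∀ l A B, d l (carE (A, B)) =
    if l ∈ B then ((-1) ^ nlt l B : ℂ) • carE (A, B.erase l) else 0

section Relations

variable {c d : ℤ → CARSpace →L[ℂ] CARSpace}

namespace IsCreationLeft

lemma star_apply (hc : IsCreationLeft c) (l : ℤ) (A B : Finset ℤ) :
    star (c l) (carE (A, B)) =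
      if l ∈ A then ((-1) ^ B.card * (-1) ^ nlt l A : ℂ) • carE (A.erase l, B) else 0 := by
  rw [star_apply_carE_of_apply_carE (fun q => hc l q.1 q.2) (Q := fun p => l ∈ p.1)
    (g := fun p => (p.1.erase l, p.2))]
  · simp [nlt_erase_self]
  · rintro ⟨A, B⟩ ⟨C, D⟩
    simp only [Prod.mk.injEq]
    constructor
    · rintro ⟨h, rfl, rfl⟩
      exact ⟨mem_insert_self l C, erase_insert h, rfl⟩
    · rintro ⟨h, rfl, rfl⟩
      exact ⟨notMem_erase l A, insert_erase h, rfl⟩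

lemma anticomm (hc : IsCreationLeft c) (l m : ℤ) : c l * c m + c m * c l = 0 := by
  refine CARSpace.ext_carE fun ⟨A, B⟩ => ?_
  simp only [add_apply, mul_apply_eq_comp, zero_apply, hc l A B, hc m A B]
  obtain rfl | hlm := eq_or_ne l m
  · by_cases hl : l ∈ A <;> simp [hl, hc _ _ B]
  rcases hlm.lt_or_gt with h | h <;> by_cases hl : l ∈ A <;> by_cases hm : m ∈ A <;>
    simp [hl, hm, hc _ _ B, h, h.ne, h.ne', h.not_gt, neg_one_pow_nlt_insert, insert_comm l m] <;>
    module

lemma anticomm_star (hc : IsCreationLeft c) (l m : ℤ) :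
    c l * star (c m) + star (c m) * c l = if l = m then 1 else 0 := by
  refine CARSpace.ext_carE fun ⟨A, B⟩ => ?_
  simp only [add_apply, mul_apply_eq_comp, hc.star_apply, hc l A B]
  obtain rfl | hlm := eq_or_ne l m
  · by_cases hl : l ∈ A <;> simp [hl, hc _ _ B, hc.star_apply, nlt_erase_self, nlt_insert_self,
      smul_smul, ← pow_add, ← two_mul, pow_mul]
  rcases hlm.lt_or_gt with h | h <;> by_cases hl : l ∈ A <;> by_cases hm : m ∈ A <;>
    simp [hl, hm, hc _ _ B, hc.star_apply, h, h.ne, h.ne', h.not_gt, neg_one_pow_nlt_insert,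
      neg_one_pow_nlt_erase, erase_insert_of_ne] <;>
    module

end IsCreationLeft

namespace IsAnnihilationRight

lemma star_apply (hd : IsAnnihilationRight d) (l : ℤ) (A B : Finset ℤ) :
    star (d l) (carE (A, B)) =
      if l ∉ B then ((-1) ^ nlt l B : ℂ) • carE (A, insert l B) else 0 := by
  rw [star_apply_carE_of_apply_carE (fun q => hd l q.1 q.2) (Q := fun p => l ∉ p.2)
    (g := fun p => (p.1, insert l p.2))]
  · simp [nlt_insert_self]
  · rintro ⟨A, B⟩ ⟨C, D⟩
    simp only [Prod.mk.injEq]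
    constructor
    · rintro ⟨h, rfl, rfl⟩
      exact ⟨notMem_erase l D, rfl, insert_erase h⟩
    · rintro ⟨h, rfl, rfl⟩
      exact ⟨mem_insert_self l B, rfl, erase_insert h⟩

lemma anticomm (hd : IsAnnihilationRight d) (l m : ℤ) : d l * d m + d m * d l = 0 := by
  refine CARSpace.ext_carE fun ⟨A, B⟩ => ?_
  simp only [add_apply, mul_apply_eq_comp, zero_apply, hd l A B, hd m A B]
  obtain rfl | hlm := eq_or_ne l m
  · by_cases hl : l ∈ B <;> simp [hl, hd _ A]
  rcases hlm.lt_or_gt with h | h <;> by_cases hl : l ∈ B <;> by_cases hm : m ∈ B <;>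
    simp [hl, hm, hd _ A, h, h.ne, h.ne', h.not_gt, neg_one_pow_nlt_erase,
      erase_right_comm (a := l)] <;>
    module

lemma anticomm_star (hd : IsAnnihilationRight d) (l m : ℤ) :
    d l * star (d m) + star (d m) * d l = if l = m then 1 else 0 := by
  refine CARSpace.ext_carE fun ⟨A, B⟩ => ?_
  simp only [add_apply, mul_apply_eq_comp, hd.star_apply, hd l A B]
  obtain rfl | hlm := eq_or_ne l m
  · by_cases hl : l ∈ B <;> simp [hl, hd _ A, hd.star_apply, nlt_erase_self, nlt_insert_self,
      smul_smul, ← pow_add, ← two_mul, pow_mul]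
  rcases hlm.lt_or_gt with h | h <;> by_cases hl : l ∈ B <;> by_cases hm : m ∈ B <;>
    simp [hl, hm, hd _ A, hd.star_apply, h, h.ne, h.ne', h.not_gt, neg_one_pow_nlt_insert,
      neg_one_pow_nlt_erase, erase_insert_of_ne] <;>
    module

end IsAnnihilationRight

lemma IsCreationLeft.anticomm_ann (hc : IsCreationLeft c) (hd : IsAnnihilationRight d)
    (l m : ℤ) : c l * d m + d m * c l = 0 := by
  refine CARSpace.ext_carE fun ⟨A, B⟩ => ?_
  simp only [add_apply, mul_apply_eq_comp, zero_apply, hc l A B, hd m A B]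
  by_cases hl : l ∈ A <;> by_cases hm : m ∈ B <;>
    simp [-card_erase_of_mem, hl, hm, hc _ _ (B.erase m), hd _ (insert l A),
      neg_one_pow_card_erase]
  module

lemma IsCreationLeft.anticomm_star_ann (hc : IsCreationLeft c) (hd : IsAnnihilationRight d)
    (l m : ℤ) : c l * star (d m) + star (d m) * c l = 0 := by
  refine CARSpace.ext_carE fun ⟨A, B⟩ => ?_
  simp only [add_apply, mul_apply_eq_comp, zero_apply, hc l A B, hd.star_apply]
  by_cases hl : l ∈ A <;> by_cases hm : m ∈ B <;>
    simp [-card_insert_of_notMem, hl, hm, hc _ _ (insert m B), hd.star_apply,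
      neg_one_pow_card_insert]
  module

lemma IsAnnihilationRight.anticomm_star_cre (hc : IsCreationLeft c) (hd : IsAnnihilationRight d)
    (l m : ℤ) : d l * star (c m) + star (c m) * d l = 0 := by
  simpa [star_add, star_mul, add_comm] using congrArg star (hc.anticomm_star_ann hd m l)

lemma IsCAR_G.isSelfAdjoint {G : CARSpace →L[ℂ] CARSpace} (hG : IsCAR_G G) :
    IsSelfAdjoint G := by
  refine CARSpace.ext_carE fun ⟨A, B⟩ => ?_
  ext ⟨C, D⟩
  rw [star_apply_carE_apply, hG, hG]
  by_cases h : (A, B) = (C, D)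
  · simp only [Prod.mk.injEq] at h
    obtain ⟨rfl, rfl⟩ := h
    simp [carE_apply]
  · simp [carE_apply, h, Ne.symm h]

lemma IsCreationLeft.anticomm_isCAR_G (hc : IsCreationLeft c) {G : CARSpace →L[ℂ] CARSpace}
    (hG : IsCAR_G G) (l : ℤ) : G * c l = -(c l * G) := by
  refine CARSpace.ext_carE fun ⟨A, B⟩ => ?_
  by_cases hl : l ∈ A <;>
    simp [-card_insert_of_notMem, mul_apply_eq_comp, hc l A B, hG _ B, hl, pow_add,
      neg_one_pow_card_insert]
  module

lemma IsAnnihilationRight.anticomm_isCAR_G (hd : IsAnnihilationRight d)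
    {G : CARSpace →L[ℂ] CARSpace} (hG : IsCAR_G G) (l : ℤ) : G * d l = -(d l * G) := by
  refine CARSpace.ext_carE fun ⟨A, B⟩ => ?_
  by_cases hl : l ∈ B <;>
    simp [-card_erase_of_mem, mul_apply_eq_comp, hd l A B, hG A, hl, pow_add,
      neg_one_pow_card_erase]
  module

lemma anticomm_smul_add_smul (hc : IsCreationLeft c) (hd : IsAnnihilationRight d)
    (α β γ δ : ℂ) (l m : ℤ) :
    (α • c l + β • d l) * (γ • c m + δ • d m) +
        (γ • c m + δ • d m) * (α • c l + β • d l) = 0 := by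
  simp only [mul_add, add_mul, smul_mul_smul_comm]
  linear_combination (norm := module) (α * γ) • hc.anticomm l m +
    (α * δ) • hc.anticomm_ann hd l m + (β * γ) • hc.anticomm_ann hd m l + (β * δ) • hd.anticomm l m

lemma anticomm_smul_add_smul_star (hc : IsCreationLeft c) (hd : IsAnnihilationRight d)
    (α β γ δ : ℂ) (l m : ℤ) :
    (α • c l + β • d l) * star (γ • c m + δ • d m) +
        star (γ • c m + δ • d m) * (α • c l + β • d l) =
      if l = m then (α * conj γ + β * conj δ) • 1 else 0 := by
  have hcc := hc.anticomm_star l m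
  have hdd := hd.anticomm_star l m
  simp only [star_add, star_smul, Complex.star_def, mul_add, add_mul, smul_mul_smul_comm]
  split_ifs at hcc hdd ⊢
  all_goals
    linear_combination (norm := module) (α * conj γ) • hcc +
      (α * conj δ) • hc.anticomm_star_ann hd l m + (β * conj γ) • hd.anticomm_star_cre hc l m +
      (β * conj δ) • hdd

lemma exists_isCreationLeft_isAnnihilationRight {lam : ℤ → ℝ}
    (hlam : ∀ l, 0 ≤ lam l ∧ lam l ≤ 1) {a b : ℤ → CARSpace →L[ℂ] CARSpace}
    (ha : IsCAR_a lam a) (hb : IsCAR_b lam b) :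
    ∃ c d, IsCreationLeft c ∧ IsAnnihilationRight d ∧ ∀ l,
      a l = (√(1 - lam l) : ℂ) • c l + (√(lam l) : ℂ) • d l ∧
      b l = (√(lam l) : ℂ) • c l - (√(1 - lam l) : ℂ) • d l := by
  have hrot : ∀ l, (√(1 - lam l) : ℂ) ^ 2 + (√(lam l) : ℂ) ^ 2 = 1 := fun l => by
    rw [← Complex.ofReal_pow, ← Complex.ofReal_pow, Real.sq_sqrt (by linarith [hlam l]),
      Real.sq_sqrt (hlam l).1]
    push_cast
    ring
  refine ⟨fun l => (√(1 - lam l) : ℂ) • a l + (√(lam l) : ℂ) • b l,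
    fun l => (√(lam l) : ℂ) • a l - (√(1 - lam l) : ℂ) • b l, fun l A B => ?_, fun l A B => ?_,
    fun l => ⟨?_, ?_⟩⟩
  · have := hrot l
    simp only [add_apply, smul_apply, ha l A B, hb l A B]
    split_ifs <;> match_scalars <;> grind
  · have := hrot l
    simp only [sub_apply, smul_apply, ha l A B, hb l A B]
    split_ifs <;> match_scalars <;> grind
  · linear_combination (norm := module) -(hrot l • a l)
  · linear_combination (norm := module) -(hrot l • b l)

lemma IsCAR_G.anticomm_smul_add_smul {G : CARSpace →L[ℂ] CARSpace} (hG : IsCAR_G G)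
    (hc : IsCreationLeft c) (hd : IsAnnihilationRight d) (α β : ℂ) (l : ℤ) :
    G * (α • c l + β • d l) = -((α • c l + β • d l) * G) := by
  rw [mul_add, add_mul, mul_smul_comm, mul_smul_comm, smul_mul_assoc, smul_mul_assoc,
    hc.anticomm_isCAR_G hG, hd.anticomm_isCAR_G hG, smul_neg, smul_neg, neg_add]

end Relations

lemma IsSelfAdjoint.mul_star_eq_neg {R : Type*} [Ring R] [StarRing R] {g x : R}
    (hg : IsSelfAdjoint g) (h : g * x = -(x * g)) : g * star x = -(star x * g) := by
  have h' := congrArg star h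
  rw [star_mul, star_neg, star_mul, hg.star_eq] at h'
  rw [h', neg_neg]

lemma commute_mul_of_anticomm {R : Type*} [Ring R] {g x y : R} (hg : g * x = -(x * g))
    (hy : y * x = -(x * y)) : Commute (g * y) x := by
  rw [Commute, SemiconjBy, mul_assoc, hy, mul_neg, ← mul_assoc, hg, neg_mul, neg_neg, mul_assoc]

/-- in the concrete quasi-free CAR model with `0 < λ_l < 1`, the operators
`G∘b_l` lie in the commutant of the *-algebra generated by the `a_m`: for all `l, m ∈ ℤ`,
`(G∘b_l)∘a_m = a_m∘(G∘b_l)` and `(G∘b_l)∘a_m* = a_m*∘(G∘b_l)`. -/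
theorem stmt9 (lam : ℤ → ℝ) (hlam : ∀ l, 0 < lam l ∧ lam l < 1)
    (a b : ℤ → CARSpace →L[ℂ] CARSpace) (G : CARSpace →L[ℂ] CARSpace)
    (ha : IsCAR_a lam a) (hb : IsCAR_b lam b) (hG : IsCAR_G G) :
    ∀ l m : ℤ,
      (G * b l) * a m = a m * (G * b l) ∧
      (G * b l) * star (a m) = star (a m) * (G * b l) := by
  intro l m
  obtain ⟨c, d, hc, hd, hab⟩ := exists_isCreationLeft_isAnnihilationRight
    (fun l => ⟨(hlam l).1.le, (hlam l).2.le⟩) ha hb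
  obtain ⟨ham, -⟩ := hab m
  obtain ⟨-, hbl⟩ := hab l
  rw [sub_eq_add_neg, ← neg_smul] at hbl
  have hGa : G * a m = -(a m * G) := ham ▸ hG.anticomm_smul_add_smul hc hd _ _ m
  have hba : b l * a m = -(a m * b l) :=
    eq_neg_of_add_eq_zero_left (hbl ▸ ham ▸ anticomm_smul_add_smul hc hd _ _ _ _ l m)
  have hba_star : b l * star (a m) = -(star (a m) * b l) := by
    refine eq_neg_of_add_eq_zero_left ?_
    rw [hbl, ham, anticomm_smul_add_smul_star hc hd]
    split_ifs with hlm
    · subst hlm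
      simp [Complex.conj_ofReal, mul_comm]
    · rfl
  exact ⟨commute_mul_of_anticomm hGa hba,
    commute_mul_of_anticomm (hG.isSelfAdjoint.mul_star_eq_neg hGa) hba_star⟩

end
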